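/- arXiv:2312.08940 — 5 statements merged into one kernel-verified Lean document; each statement's English description precedes it below -/
import Mathlib

section
/- Let w : Fin n → ℕ, c := ∑ i, (w i : ℤ), and Q : Fin n → Fin n → ℤ with Q i j := (w i)*(w j) for i ≠ j and Q i i := (w i)*((w i) − c). For a binary vector x : Fin n → ℤ (with x i ∈ {0,1}) let A_x := {i : x i = 1} be the associated Finset. Then x minimizes the quadratic form ∑ i, ∑ j, x i * Q i j * x j over all binary vectors if and only if A_x minimizes the NPP error E(w, A) := |(∑ i in A, (w i : ℤ)) − (∑ i in Aᶜ, (w i : ℤ))| over all Finsets A ⊆ Fin n. -/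
section aux

variable {n : ℕ} (w : Fin n → ℕ) (c : ℤ)

lemma npp_quad_eq (Q : Fin n → Fin n → ℤ)
    (hQ : ∀ i j, Q i j =
      if i = j then (w i : ℤ) * ((w i : ℤ) - c) else (w i : ℤ) * (w j : ℤ))
    (x : Fin n → ℤ) (hx : ∀ i, x i = 0 ∨ x i = 1) :
    ∑ i, ∑ j, x i * Q i j * x j =
      (∑ i, x i * w i) ^ 2 - c * ∑ i, x i * w i := by
  have h1 : ∀ i j, x i * Q i j * x j =
      (x i * w i) * (x j * w j) - (if i = j then c * (x i * w i) else 0) := by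
    intro i j
    rw [hQ]
    by_cases h : i = j
    · subst h
      rcases hx i with h0 | h0 <;> simp [h0] <;> ring
    · simp [h]; ring
  calc ∑ i, ∑ j, x i * Q i j * x j
      = ∑ i, ∑ j, ((x i * w i) * (x j * w j) - (if i = j then c * (x i * w i) else 0)) := by
        simp_rw [h1]
    _ = ∑ i, ((x i * w i) * (∑ j, x j * w j) - c * (x i * w i)) := by
        refine Finset.sum_congr rfl fun i _ => ?_
        rw [Finset.sum_sub_distrib, ← Finset.mul_sum, Finset.sum_ite_eq]
        simp
    _ = (∑ i, x i * w i) ^ 2 - c * ∑ i, x i * w i := by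
        rw [Finset.sum_sub_distrib, ← Finset.sum_mul, ← Finset.mul_sum]; ring

lemma npp_filter_sum (x : Fin n → ℤ) (hx : ∀ i, x i = 0 ∨ x i = 1) :
    ∑ i ∈ Finset.univ.filter (fun i => x i = 1), (w i : ℤ) = ∑ i, x i * w i := by
  rw [Finset.sum_filter]
  refine Finset.sum_congr rfl fun i _ => ?_
  rcases hx i with h0 | h0 <;> simp [h0]

lemma npp_err_eq (B : Finset (Fin n)) (hc : c = ∑ i, (w i : ℤ)) :
    (∑ i ∈ B, (w i : ℤ)) - ∑ i ∈ Bᶜ, (w i : ℤ) = 2 * (∑ i ∈ B, (w i : ℤ)) - c := by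
  have := Finset.sum_add_sum_compl B (fun i => (w i : ℤ))
  rw [hc]; linarith

end aux

/-- A binary vector `x` minimizes the NPP QUBO quadratic form over all binary
vectors if and only if the associated set `A_x = {i | x i = 1}` minimizes the
NPP error over all subsets of `Fin n`. -/
theorem npp_qubo_minimizer_iff (n : ℕ) (w : Fin n → ℕ) (c : ℤ)
    (hc : c = ∑ i, (w i : ℤ)) (Q : Fin n → Fin n → ℤ)
    (hQ : ∀ i j, Q i j =
      if i = j then (w i : ℤ) * ((w i : ℤ) - c) else (w i : ℤ) * (w j : ℤ))
    (x : Fin n → ℤ) (hx : ∀ i, x i = 0 ∨ x i = 1) :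
    (∀ y : Fin n → ℤ, (∀ i, y i = 0 ∨ y i = 1) →
        ∑ i, ∑ j, x i * Q i j * x j ≤ ∑ i, ∑ j, y i * Q i j * y j)
      ↔ (∀ B : Finset (Fin n),
          |(∑ i ∈ Finset.univ.filter (fun i => x i = 1), (w i : ℤ)) -
              ∑ i ∈ (Finset.univ.filter (fun i => x i = 1))ᶜ, (w i : ℤ)| ≤
            |(∑ i ∈ B, (w i : ℤ)) - ∑ i ∈ Bᶜ, (w i : ℤ)|) := by
  have key : ∀ S T : ℤ, S ^ 2 - c * S ≤ T ^ 2 - c * T ↔ |2 * S - c| ≤ |2 * T - c| := by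
    intro S T
    have habs : ∀ a b : ℤ, a ^ 2 ≤ b ^ 2 ↔ |a| ≤ |b| := by
      intro a b
      rw [← sq_abs a, ← sq_abs b]
      exact pow_le_pow_iff_left₀ (abs_nonneg a) (abs_nonneg b) two_ne_zero
    rw [← habs]
    constructor <;> intro h <;> nlinarith
  constructor
  · intro h B
    set y : Fin n → ℤ := fun i => if i ∈ B then 1 else 0 with hy
    have hyb : ∀ i, y i = 0 ∨ y i = 1 := by
      intro i; by_cases hi : i ∈ B <;> simp [hy, hi]
    have hSy : ∑ i, y i * w i = ∑ i ∈ B, (w i : ℤ) := by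
      have h2 : ∀ i, y i * w i = if i ∈ B then (w i : ℤ) else 0 := by
        intro i; by_cases hi : i ∈ B <;> simp [hy, hi]
      simp_rw [h2]
      simp [Finset.sum_ite_mem]
    have := h y hyb
    rw [npp_quad_eq w c Q hQ x hx, npp_quad_eq w c Q hQ y hyb, key, hSy] at this
    rw [npp_err_eq w c _ hc, npp_err_eq w c _ hc, npp_filter_sum w x hx]
    exact this
  · intro h y hyb
    have := h (Finset.univ.filter (fun i => y i = 1))
    rw [npp_err_eq w c _ hc, npp_err_eq w c _ hc, npp_filter_sum w x hx,
      npp_filter_sum w y hyb] at this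
    rw [npp_quad_eq w c Q hQ x hx, npp_quad_eq w c Q hQ y hyb, key]
    exact this
end

section
/- Let w : Fin n → ℕ and let B : Fin m → Finset (Fin n) be pairwise disjoint blocks whose union is all of Fin n. For each k let A k ⊆ B k be a Finset and D k := (∑ i in A k, (w i : ℤ)) − (∑ i in (B k \ A k), (w i : ℤ)) its signed sub-error. Then for every sign choice s : Fin m → ℤ with s k ∈ {−1, 1}, the merged set Â := (⋃ over k with s k = 1 of A k) ∪ (⋃ over k with s k = −1 of B k \ A k) satisfies E(w, Â) = |∑ k, s k * D k|. -/
/-- Merging sub-solutions of the decomposed NPP: if `Fin n` is split into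
pairwise disjoint blocks `B k` covering it, `A k ⊆ B k` are sub-solutions with
signed sub-errors `D k`, then for every sign choice `s` the merged set
`Â = (⋃_{s k = 1} A k) ∪ (⋃_{s k = -1} B k \ A k)` has NPP error
`|∑ k, s k * D k|`. -/
theorem npp_merge_error (n m : ℕ) (w : Fin n → ℕ) (B : Fin m → Finset (Fin n))
    (hdisj : ∀ k l, k ≠ l → Disjoint (B k) (B l))
    (hcover : Finset.univ.biUnion B = Finset.univ)
    (A : Fin m → Finset (Fin n)) (hA : ∀ k, A k ⊆ B k)
    (D : Fin m → ℤ)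
    (hD : ∀ k, D k = (∑ i ∈ A k, (w i : ℤ)) - ∑ i ∈ B k \ A k, (w i : ℤ))
    (s : Fin m → ℤ) (hs : ∀ k, s k = -1 ∨ s k = 1) :
    |(∑ i ∈ (Finset.univ.filter (fun k => s k = 1)).biUnion A ∪
          (Finset.univ.filter (fun k => s k = -1)).biUnion (fun k => B k \ A k),
        (w i : ℤ)) -
      ∑ i ∈ ((Finset.univ.filter (fun k => s k = 1)).biUnion A ∪
          (Finset.univ.filter (fun k => s k = -1)).biUnion (fun k => B k \ A k))ᶜ,
        (w i : ℤ)| = |∑ k, s k * D k| := by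
  classical
  set f : Fin n → ℤ := fun i => (w i : ℤ) with hf
  set Ah : Finset (Fin n) :=
    (Finset.univ.filter (fun k => s k = 1)).biUnion A ∪
      (Finset.univ.filter (fun k => s k = -1)).biUnion (fun k => B k \ A k) with hAh
  have hsplit : ∀ S : Finset (Fin n), ∑ i ∈ S, f i = ∑ k, ∑ i ∈ S ∩ B k, f i := by
    intro S
    have hS : S = Finset.univ.biUnion (fun k => S ∩ B k) := by
      ext i
      simp only [Finset.mem_biUnion, Finset.mem_inter, Finset.mem_univ, true_and]
      constructor
      · intro hi
        have hu : i ∈ Finset.univ.biUnion B := by rw [hcover]; exact Finset.mem_univ i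
        rcases Finset.mem_biUnion.mp hu with ⟨k, _, hk⟩
        exact ⟨k, hi, hk⟩
      · rintro ⟨k, hi, _⟩; exact hi
    conv_lhs => rw [hS]
    rw [Finset.sum_biUnion]
    intro k _ l _ hkl
    exact (hdisj k l hkl).mono Finset.inter_subset_right Finset.inter_subset_right
  have hmem : ∀ k, Ah ∩ B k = if s k = 1 then A k else B k \ A k := by
    intro k
    ext i
    simp only [hAh, Finset.mem_inter, Finset.mem_union, Finset.mem_biUnion,
      Finset.mem_filter, Finset.mem_univ, true_and, Finset.mem_sdiff]
    constructor
    · rintro ⟨h | h, hiB⟩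
      · rcases h with ⟨l, hsl, hil⟩
        have hlk : l = k := by
          by_contra hne
          exact Finset.disjoint_left.mp (hdisj l k hne) (hA l hil) hiB
        subst hlk
        rw [if_pos hsl]; exact hil
      · rcases h with ⟨l, hsl, hil⟩
        have hlk : l = k := by
          by_contra hne
          exact Finset.disjoint_left.mp (hdisj l k hne) hil.1 hiB
        subst hlk
        rw [if_neg (by rw [hsl]; norm_num)]
        exact Finset.mem_sdiff.mpr hil
    · intro hi
      rcases hs k with h | h
      · rw [if_neg (by rw [h]; norm_num)] at hi
        exact ⟨Or.inr ⟨k, h, Finset.mem_sdiff.mp hi⟩, (Finset.mem_sdiff.mp hi).1⟩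
      · rw [if_pos h] at hi
        exact ⟨Or.inl ⟨k, h, hi⟩, hA k hi⟩
  have hmemc : ∀ k, Ahᶜ ∩ B k = if s k = 1 then B k \ A k else A k := by
    intro k
    have h1 : Ahᶜ ∩ B k = B k \ (Ah ∩ B k) := by
      ext i
      simp only [Finset.mem_inter, Finset.mem_compl, Finset.mem_sdiff]
      tauto
    rw [h1, hmem k]
    rcases hs k with h | h
    · rw [if_neg (by rw [h]; norm_num), if_neg (by rw [h]; norm_num)]
      exact Finset.sdiff_sdiff_eq_self (hA k)
    · rw [if_pos h, if_pos h]
  have key : (∑ i ∈ Ah, f i) - ∑ i ∈ Ahᶜ, f i = ∑ k, s k * D k := by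
    rw [hsplit Ah, hsplit Ahᶜ, ← Finset.sum_sub_distrib]
    refine Finset.sum_congr rfl fun k _ => ?_
    rw [hmem k, hmemc k, hD k]
    rcases hs k with h | h
    · rw [if_neg (by rw [h]; norm_num), if_neg (by rw [h]; norm_num), h]
      ring
    · rw [if_pos h, if_pos h, h]
      ring
  rw [← key]
end

section
/- Let w : Fin n → ℕ and let B : Fin m → Finset (Fin n) be pairwise disjoint blocks whose union is all of Fin n. For each k let A k ⊆ B k be a Finset, D k := (∑ i in A k, (w i : ℤ)) − (∑ i in (B k \ A k), (w i : ℤ)), and E k := |D k| ∈ ℕ the sub-error. Then the minimum of E(w, Â) over all merged solutions Â (i.e., over all sign choices s : Fin m → {−1,1}, with Â := (⋃ over k with s k = 1 of A k) ∪ (⋃ over k with s k = −1 of B k \ A k)) equals the optimal value of the auxiliary NPP on the sub-errors: min over Finsets A' ⊆ Fin m of |(∑ k in A', (E k : ℤ)) − (∑ k in A'ᶜ, (E k : ℤ))|. -/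
/-!
Merging with sign choice `s` swaps the roles of `A k` and `B k \ A k` in the blocks with
`s k = -1`, so the merged difference is the signed sum `∑ k, s k * D k`. Flipping the sign
of every block with `D k < 0` turns it into a signed sum of the `E k = |D k|`; this flip is
an involution of the sign choices (symmetric difference with the set of negative blocks), so
both infima are taken over the same set of values.
-/

open Finset Function
open scoped symmDiff

namespace NumberPartitioning

variable {ι κ G : Type*} [Fintype ι] [Fintype κ] [DecidableEq ι] [DecidableEq κ]

def partitionDiff [AddCommGroup G] (f : ι → G) (S : Finset ι) : G :=
  ∑ i ∈ S, f i - ∑ i ∈ Sᶜ, f i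

theorem partitionDiff_eq_sum_ite [AddCommGroup G] (f : ι → G) (S : Finset ι) :
    partitionDiff f S = ∑ i, if i ∈ S then f i else -f i := by
  rw [partitionDiff, sum_ite, sum_neg_distrib, sub_eq_add_neg]
  congr 3 <;> ext <;> simp

section Abs

variable [AddCommGroup G] [LinearOrder G] [IsOrderedAddMonoid G]

theorem partitionDiff_abs_symmDiff (f : ι → G) (S : Finset ι) :
    partitionDiff (fun i => |f i|) (S ∆ univ.filter (f · < 0)) = partitionDiff f S := by
  simp only [partitionDiff_eq_sum_ite]
  refine sum_congr rfl fun i _ => ?_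
  rcases lt_or_ge (f i) 0 with h | h <;> by_cases hi : i ∈ S <;>
    simp [mem_symmDiff, hi, h, abs_of_neg, abs_of_nonneg]

theorem partitionDiff_symmDiff (f : ι → G) (S : Finset ι) :
    partitionDiff f (S ∆ univ.filter (f · < 0)) = partitionDiff (fun i => |f i|) S := by
  rw [← partitionDiff_abs_symmDiff f, symmDiff_symmDiff_cancel_right]

end Abs

section Blocks

variable {B C : κ → Finset ι}

theorem compl_biUnion_eq_biUnion_sdiff (hdisj : Pairwise (Disjoint on B))
    (hcover : univ.biUnion B = univ) (hC : ∀ k, C k ⊆ B k) :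
    (univ.biUnion C)ᶜ = univ.biUnion fun k => B k \ C k := by
  ext i
  simp only [mem_compl, mem_biUnion, mem_univ, true_and, mem_sdiff, not_exists]
  constructor
  · intro hi
    obtain ⟨k, hk⟩ := mem_biUnion.1 (hcover ▸ mem_univ i)
    exact ⟨k, hk.2, hi k⟩
  · rintro ⟨k, hik, hik'⟩ l hil
    obtain rfl : l = k := by
      by_contra hlk
      exact disjoint_left.1 (hdisj hlk) (hC l hil) hik
    exact hik' hil

theorem partitionDiff_biUnion [AddCommGroup G] (w : ι → G) (hdisj : Pairwise (Disjoint on B))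
    (hcover : univ.biUnion B = univ) (hC : ∀ k, C k ⊆ B k) :
    partitionDiff w (univ.biUnion C) = ∑ k, (∑ i ∈ C k, w i - ∑ i ∈ B k \ C k, w i) := by
  have hdisjC : Pairwise (Disjoint on C) := fun k l hkl => (hdisj hkl).mono (hC k) (hC l)
  have hdisjBC : Pairwise (Disjoint on fun k => B k \ C k) :=
    fun k l hkl => (hdisj hkl).mono sdiff_subset sdiff_subset
  rw [partitionDiff, compl_biUnion_eq_biUnion_sdiff hdisj hcover hC,
    sum_biUnion (hdisjC.set_pairwise _), sum_biUnion (hdisjBC.set_pairwise _), sum_sub_distrib]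

theorem partitionDiff_merge [AddCommGroup G] (w : ι → G) (hdisj : Pairwise (Disjoint on B))
    (hcover : univ.biUnion B = univ) {A : κ → Finset ι} (hA : ∀ k, A k ⊆ B k) (S : Finset κ) :
    partitionDiff w (S.biUnion A ∪ Sᶜ.biUnion fun k => B k \ A k) =
      partitionDiff (fun k => ∑ i ∈ A k, w i - ∑ i ∈ B k \ A k, w i) S := by
  set C : κ → Finset ι := fun k => if k ∈ S then A k else B k \ A k
  have hCB : ∀ k, C k ⊆ B k := fun k => by
    by_cases hk : k ∈ S <;> simp [C, hk, hA k]
  have hunion : S.biUnion A ∪ Sᶜ.biUnion (fun k => B k \ A k) = univ.biUnion C := by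
    rw [← union_compl S, union_biUnion]
    congr 1 <;> refine biUnion_congr rfl fun k hk => ?_ <;> simp_all [C]
  rw [hunion, partitionDiff_biUnion w hdisj hcover hCB, partitionDiff_eq_sum_ite]
  refine sum_congr rfl fun k _ => ?_
  by_cases hk : k ∈ S <;> simp [C, hk, Finset.sdiff_sdiff_eq_self (hA k)]

end Blocks

end NumberPartitioning

open NumberPartitioning in
/-- The minimal NPP error over all merged solutions (over all sign choices)
equals the optimal value of the auxiliary NPP whose weights are the sub-errors
`E k = |D k|`. -/
theorem npp_merge_min_eq_aux_npp_min (n m : ℕ) (w : Fin n → ℕ)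
    (B : Fin m → Finset (Fin n))
    (hdisj : ∀ k l, k ≠ l → Disjoint (B k) (B l))
    (hcover : Finset.univ.biUnion B = Finset.univ)
    (A : Fin m → Finset (Fin n)) (hA : ∀ k, A k ⊆ B k)
    (D : Fin m → ℤ)
    (hD : ∀ k, D k = (∑ i ∈ A k, (w i : ℤ)) - ∑ i ∈ B k \ A k, (w i : ℤ))
    (E : Fin m → ℕ) (hE : ∀ k, (E k : ℤ) = |D k|) :
    sInf {e : ℤ | ∃ s : Fin m → ℤ, (∀ k, s k = -1 ∨ s k = 1) ∧
        e = |(∑ i ∈ (Finset.univ.filter (fun k => s k = 1)).biUnion A ∪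
                (Finset.univ.filter (fun k => s k = -1)).biUnion
                  (fun k => B k \ A k), (w i : ℤ)) -
              ∑ i ∈ ((Finset.univ.filter (fun k => s k = 1)).biUnion A ∪
                (Finset.univ.filter (fun k => s k = -1)).biUnion
                  (fun k => B k \ A k))ᶜ, (w i : ℤ)|} =
    sInf {e : ℤ | ∃ A' : Finset (Fin m),
        e = |(∑ k ∈ A', (E k : ℤ)) - ∑ k ∈ A'ᶜ, (E k : ℤ)|} := by
  have merged (S : Finset (Fin m)) :
      partitionDiff (fun i => (w i : ℤ)) (S.biUnion A ∪ Sᶜ.biUnion fun k => B k \ A k) =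
        partitionDiff D S := by
    rw [partitionDiff_merge _ hdisj hcover hA, ← funext hD]
  have hE' : (fun k => (E k : ℤ)) = fun k => |D k| := funext hE
  have signs (s : Fin m → ℤ) (hs : ∀ k, s k = -1 ∨ s k = 1) :
      univ.filter (fun k => s k = -1) = (univ.filter fun k => s k = 1)ᶜ := by
    ext k; rcases hs k with h | h <;> simp [h]
  congr 1
  ext e
  constructor
  · rintro ⟨s, hs, rfl⟩
    refine ⟨univ.filter (fun k => s k = 1) ∆ univ.filter (D · < 0), ?_⟩
    rw [signs s hs]
    change |partitionDiff (fun i => (w i : ℤ)) _| = |partitionDiff (fun k => (E k : ℤ)) _|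
    rw [merged, hE', partitionDiff_abs_symmDiff]
  · rintro ⟨S, rfl⟩
    set T := S ∆ univ.filter (D · < 0)
    set s : Fin m → ℤ := fun k => if k ∈ T then 1 else -1
    have hs (k : Fin m) : s k = -1 ∨ s k = 1 := by by_cases hk : k ∈ T <;> simp [s, hk]
    have hT : univ.filter (fun k => s k = 1) = T := by
      ext k; by_cases hk : k ∈ T <;> simp [s, hk]
    refine ⟨s, hs, ?_⟩
    rw [signs s hs, hT]
    change |partitionDiff (fun k => (E k : ℤ)) S| = |partitionDiff (fun i => (w i : ℤ)) _|
    rw [merged, partitionDiff_symmDiff, hE']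
end

section
/- Let S be a nonempty finite set of natural numbers with maximum g, and consider the NPP whose weights are the distinct powers of two {2^t : t ∈ S}. Then ∑_{t ∈ S, t ≠ g} 2^t < 2^g, and the optimal value of this NPP is 2 * 2^g − ∑_{t ∈ S} 2^t, attained by the partition A = {g} versus S \ {g}; i.e., for every subset A ⊆ S one has |(∑ t in A, (2^t : ℤ)) − (∑ t in S \ A, (2^t : ℤ))| ≥ 2 * 2^g − ∑_{t ∈ S} 2^t, with equality for A = {g}. -/
/-- For the NPP with weight set `{2^t : t ∈ S}` (`S` a nonempty finite set of
naturals with maximum `g`): the remaining powers sum to less than `2^g`, every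
partition `A ⊆ S` has error at least `2 * 2^g - ∑_{t ∈ S} 2^t`, and this value
is attained by `A = {g}`. -/
theorem npp_powers_of_two_opt (S : Finset ℕ) (hS : S.Nonempty) (g : ℕ)
    (hg : g = S.max' hS) :
    (∑ t ∈ S.erase g, (2 : ℤ) ^ t) < 2 ^ g ∧
    (∀ A ⊆ S,
      2 * 2 ^ g - (∑ t ∈ S, (2 : ℤ) ^ t) ≤
        |(∑ t ∈ A, (2 : ℤ) ^ t) - ∑ t ∈ S \ A, (2 : ℤ) ^ t|) ∧
    |(∑ t ∈ ({g} : Finset ℕ), (2 : ℤ) ^ t) - ∑ t ∈ S \ {g}, (2 : ℤ) ^ t| =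
      2 * 2 ^ g - ∑ t ∈ S, (2 : ℤ) ^ t := by
  have hgS : g ∈ S := hg ▸ S.max'_mem hS
  -- part 1
  have hsub : S.erase g ⊆ Finset.range g := by
    intro t ht
    rw [Finset.mem_range]
    have h1 := S.le_max' t (Finset.mem_of_mem_erase ht)
    have h2 := Finset.ne_of_mem_erase ht
    rw [← hg] at h1; omega
  have h1 : (∑ t ∈ S.erase g, (2 : ℤ) ^ t) < 2 ^ g := by
    calc (∑ t ∈ S.erase g, (2 : ℤ) ^ t) ≤ ∑ t ∈ Finset.range g, (2 : ℤ) ^ t :=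
          Finset.sum_le_sum_of_subset_of_nonneg hsub (fun i _ _ => by positivity)
      _ = 2 ^ g - 1 := by
          have key : ∀ n, ∑ t ∈ Finset.range n, (2 : ℤ) ^ t = 2 ^ n - 1 := by
            intro n
            induction n with
            | zero => simp
            | succ m ih => rw [Finset.sum_range_succ, ih]; ring
          exact key g
      _ < 2 ^ g := by linarith
  have hTsplit : (∑ t ∈ S, (2 : ℤ) ^ t) = 2 ^ g + ∑ t ∈ S.erase g, (2 : ℤ) ^ t := by
    rw [← Finset.add_sum_erase S _ hgS]
  refine ⟨h1, ?_, ?_⟩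
  · intro A hA
    have hsplit : (∑ t ∈ A, (2 : ℤ) ^ t) + (∑ t ∈ S \ A, (2 : ℤ) ^ t) = ∑ t ∈ S, (2 : ℤ) ^ t := by
      rw [← Finset.sum_union (Finset.disjoint_sdiff), Finset.union_sdiff_of_subset hA]
    by_cases hgA : g ∈ A
    · have hge : (2 : ℤ) ^ g ≤ ∑ t ∈ A, (2 : ℤ) ^ t :=
        Finset.single_le_sum (f := fun t => (2 : ℤ) ^ t) (fun i _ => by positivity) hgA
      calc 2 * 2 ^ g - (∑ t ∈ S, (2 : ℤ) ^ t)
          ≤ (∑ t ∈ A, (2 : ℤ) ^ t) - ∑ t ∈ S \ A, (2 : ℤ) ^ t := by linarith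
        _ ≤ |(∑ t ∈ A, (2 : ℤ) ^ t) - ∑ t ∈ S \ A, (2 : ℤ) ^ t| := le_abs_self _
    · have hgB : g ∈ S \ A := Finset.mem_sdiff.mpr ⟨hgS, hgA⟩
      have hge : (2 : ℤ) ^ g ≤ ∑ t ∈ S \ A, (2 : ℤ) ^ t :=
        Finset.single_le_sum (f := fun t => (2 : ℤ) ^ t) (fun i _ => by positivity) hgB
      calc 2 * 2 ^ g - (∑ t ∈ S, (2 : ℤ) ^ t)
          ≤ (∑ t ∈ S \ A, (2 : ℤ) ^ t) - ∑ t ∈ A, (2 : ℤ) ^ t := by linarith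
        _ ≤ |(∑ t ∈ A, (2 : ℤ) ^ t) - ∑ t ∈ S \ A, (2 : ℤ) ^ t| := by
            rw [abs_sub_comm]; exact le_abs_self _
  · have hsd : S \ {g} = S.erase g := by
      ext t; simp [Finset.mem_sdiff, Finset.mem_erase, and_comm]
    rw [hsd, Finset.sum_singleton, hTsplit, abs_of_nonneg (by linarith)]
    ring
end

section
/- For n ≥ 1 consider the NPP with weights t ↦ 2^t over the index set {0, 1, …, n}. Suppose the index set is partitioned into m ≥ 2 pairwise disjoint nonempty blocks B 1, …, B m, each containing at least two elements, and in each block an optimal sub-partition is chosen, i.e., a subset A k ⊆ B k minimizing |(∑ t in A k, (2^t : ℤ)) − (∑ t in B k \ A k, (2^t : ℤ))| over subsets of B k. Then every merged solution is suboptimal: for every sign choice s : Fin m → {−1, 1}, the merged set Â := (⋃ over k with s k = 1 of A k) ∪ (⋃ over k with s k = −1 of B k \ A k) satisfies |(∑ t in Â, (2^t : ℤ)) − (∑ t in Âᶜ, (2^t : ℤ))| ≥ 3, whereas the optimal value of the full NPP is 1. -/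
/-- For `n ≥ 1` and the NPP with weights `2^0, …, 2^n`: if the index set is
partitioned into `m ≥ 2` pairwise disjoint blocks, each with at least two
elements, and in each block an optimal sub-partition `A k ⊆ B k` is chosen,
then every merged solution (for any sign choice) has error at least 3 — it is
suboptimal, since the optimal value of the full instance is 1. -/
theorem npp_powers_decomposition_suboptimal (n m : ℕ) (hn : 1 ≤ n)
    (hm : 2 ≤ m) (B : Fin m → Finset (Fin (n + 1)))
    (hdisj : ∀ k l, k ≠ l → Disjoint (B k) (B l))
    (hcover : Finset.univ.biUnion B = Finset.univ)
    (hblocks : ∀ k, 2 ≤ (B k).card)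
    (A : Fin m → Finset (Fin (n + 1))) (hA : ∀ k, A k ⊆ B k)
    (hopt : ∀ k, ∀ C ⊆ B k,
      |(∑ t ∈ A k, (2 : ℤ) ^ (t : ℕ)) - ∑ t ∈ B k \ A k, (2 : ℤ) ^ (t : ℕ)| ≤
        |(∑ t ∈ C, (2 : ℤ) ^ (t : ℕ)) - ∑ t ∈ B k \ C, (2 : ℤ) ^ (t : ℕ)|)
    (s : Fin m → ℤ) (hs : ∀ k, s k = -1 ∨ s k = 1) :
    3 ≤ |(∑ t ∈ (Finset.univ.filter (fun k => s k = 1)).biUnion A ∪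
            (Finset.univ.filter (fun k => s k = -1)).biUnion
              (fun k => B k \ A k), (2 : ℤ) ^ (t : ℕ)) -
          ∑ t ∈ ((Finset.univ.filter (fun k => s k = 1)).biUnion A ∪
            (Finset.univ.filter (fun k => s k = -1)).biUnion
              (fun k => B k \ A k))ᶜ, (2 : ℤ) ^ (t : ℕ)| := by
  classical
  set f : Fin (n+1) → ℤ := fun t => (2:ℤ)^(t:ℕ) with hfdef
  have hf1 : ∀ t, (1:ℤ) ≤ f t := by
    intro t
    have h := pow_pos (show (0:ℤ) < 2 by norm_num) (t:ℕ)
    simp only [hfdef]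
    omega
  have hf0 : ∀ t, (0:ℤ) ≤ f t := fun t => le_trans zero_le_one (hf1 t)
  have hsum0 : ∀ S : Finset (Fin (n+1)), 0 ≤ ∑ t ∈ S, f t :=
    fun S => Finset.sum_nonneg fun t _ => hf0 t
  have hsum1 : ∀ S : Finset (Fin (n+1)), S.Nonempty → 1 ≤ ∑ t ∈ S, f t := by
    rintro S ⟨u, hu⟩
    exact le_trans (hf1 u) (Finset.single_le_sum (fun i _ => hf0 i) hu)
  have hsplitB : ∀ k, ∑ t ∈ B k \ A k, f t + ∑ t ∈ A k, f t = ∑ t ∈ B k, f t :=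
    fun k => Finset.sum_sdiff (hA k)
  -- key: both halves of each optimal sub-partition have sum at least 1
  have key : ∀ k, 1 ≤ ∑ t ∈ A k, f t ∧ 1 ≤ ∑ t ∈ B k \ A k, f t := by
    intro k
    obtain ⟨t, ht⟩ : (B k).Nonempty := Finset.card_pos.mp (by have := hblocks k; omega)
    have herr := hopt k {t} (Finset.singleton_subset_iff.mpr ht)
    rw [Finset.sum_singleton] at herr
    have h1 : ∑ u ∈ B k \ {t}, f u + f t = ∑ u ∈ B k, f u := by
      simpa using Finset.sum_sdiff (f := f) (Finset.singleton_subset_iff.mpr ht)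
    have h2 : 1 ≤ ∑ u ∈ B k \ {t}, f u := by
      apply hsum1
      rw [Finset.sdiff_nonempty]
      intro hsub
      have hc := Finset.card_le_card hsub
      simp only [Finset.card_singleton] at hc
      have := hblocks k
      omega
    have hx0 := hsum0 (A k)
    have hy0 := hsum0 (B k \ A k)
    have hxy := hsplitB k
    have hft := hf1 t
    have hlt : |f t - ∑ u ∈ B k \ {t}, f u| < ∑ u ∈ B k, f u := by
      rw [abs_sub_lt_iff]
      constructor <;> linarith
    rcases lt_or_ge (∑ u ∈ A k, f u) 1 with hx | hx
    · exfalso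
      have hx' : ∑ u ∈ A k, f u = 0 := le_antisymm (by omega) hx0
      rw [hx', zero_sub, abs_neg, abs_of_nonneg hy0] at herr
      linarith
    rcases lt_or_ge (∑ u ∈ B k \ A k, f u) 1 with hy | hy
    · exfalso
      have hy' : ∑ u ∈ B k \ A k, f u = 0 := le_antisymm (by omega) hy0
      rw [hy', sub_zero, abs_of_nonneg hx0] at herr
      linarith
    exact ⟨hx, hy⟩
  -- the merged set as a single biUnion
  set g : Fin m → Finset (Fin (n+1)) := fun k => if s k = 1 then A k else B k \ A k
    with hgdef
  have hgsub : ∀ k, g k ⊆ B k := by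
    intro k
    simp only [hgdef]
    split
    · exact hA k
    · exact Finset.sdiff_subset
  have hunion : (Finset.univ.filter (fun k => s k = 1)).biUnion A ∪
      (Finset.univ.filter (fun k => s k = -1)).biUnion (fun k => B k \ A k)
      = Finset.univ.biUnion g := by
    ext t
    simp only [Finset.mem_union, Finset.mem_biUnion, Finset.mem_filter,
      Finset.mem_univ, true_and, hgdef]
    constructor
    · rintro (⟨k, hk1, hk2⟩ | ⟨k, hk1, hk2⟩)
      · exact ⟨k, by rw [if_pos hk1]; exact hk2⟩
      · refine ⟨k, ?_⟩
        rw [if_neg (by rw [hk1]; norm_num)]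
        exact hk2
    · rintro ⟨k, hk⟩
      rcases hs k with h | h
      · right
        refine ⟨k, h, ?_⟩
        rwa [if_neg (by rw [h]; norm_num)] at hk
      · left
        exact ⟨k, h, by rwa [if_pos h] at hk⟩
  have hdisjg : Set.PairwiseDisjoint (↑(Finset.univ : Finset (Fin m))) g := by
    intro k _ l _ hkl
    exact Finset.disjoint_of_subset_left (hgsub k)
      (Finset.disjoint_of_subset_right (hgsub l) (hdisj k l hkl))
  have hdisjB : Set.PairwiseDisjoint (↑(Finset.univ : Finset (Fin m))) B :=
    fun k _ l _ hkl => hdisj k l hkl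
  have hS : ∑ t ∈ Finset.univ.biUnion g, f t = ∑ k, ∑ t ∈ g k, f t :=
    Finset.sum_biUnion hdisjg
  have hT : ∑ k, ∑ t ∈ B k, f t = ∑ t, f t := by
    rw [← Finset.sum_biUnion hdisjB, hcover]
  have hTval : ∑ t : Fin (n+1), f t = 2^(n+1) - 1 := by
    have h0 : ∑ t : Fin (n+1), f t = ∑ i ∈ Finset.range (n+1), (2:ℤ)^i :=
      Fin.sum_univ_eq_sum_range (fun i => (2:ℤ)^i) (n+1)
    have h := geom_sum_mul (2:ℤ) (n+1)
    norm_num at h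
    rw [h0, h]
  have hcompl := Finset.sum_add_sum_compl (Finset.univ.biUnion g) f
  -- per-block error bounds
  have heb : ∀ k, |2 * ∑ t ∈ g k, f t - ∑ t ∈ B k, f t| ≤ ∑ t ∈ B k, f t - 2 := by
    intro k
    obtain ⟨hx, hy⟩ := key k
    have hxy := hsplitB k
    simp only [hgdef]
    split
    · rw [abs_le]; constructor <;> linarith
    · rw [abs_le]; constructor <;> linarith
  -- the block containing n
  obtain ⟨k0, hk0⟩ : ∃ k, Fin.last n ∈ B k := by
    have h : (Fin.last n) ∈ Finset.univ.biUnion B := by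
      rw [hcover]; exact Finset.mem_univ _
    simpa [Finset.mem_biUnion] using h
  have hflast : f (Fin.last n) = 2^n := by simp [hfdef, Fin.val_last]
  have hrB : ∑ t ∈ B k0 \ {Fin.last n}, f t + 2^n = ∑ t ∈ B k0, f t := by
    have h := Finset.sum_sdiff (f := f) (Finset.singleton_subset_iff.mpr hk0)
    rw [Finset.sum_singleton, hflast] at h
    exact h
  have hek0 : (2:ℤ)^n - ∑ t ∈ B k0 \ {Fin.last n}, f t ≤
      |2 * ∑ t ∈ g k0, f t - ∑ t ∈ B k0, f t| := by
    have hxy := hsplitB k0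
    have hcore : (2:ℤ)^n - ∑ t ∈ B k0 \ {Fin.last n}, f t ≤
        |∑ t ∈ A k0, f t - ∑ t ∈ B k0 \ A k0, f t| := by
      by_cases hmem : Fin.last n ∈ A k0
      · have hx : (2:ℤ)^n ≤ ∑ t ∈ A k0, f t := by
          have h := Finset.single_le_sum (fun i _ => hf0 i) hmem
          rwa [hflast] at h
        refine le_trans ?_ (le_abs_self _)
        linarith
      · have hsub : A k0 ⊆ B k0 \ {Fin.last n} := by
          intro t htm
          rw [Finset.mem_sdiff, Finset.mem_singleton]
          exact ⟨hA k0 htm, fun h => hmem (h ▸ htm)⟩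
        have hx : ∑ t ∈ A k0, f t ≤ ∑ t ∈ B k0 \ {Fin.last n}, f t :=
          Finset.sum_le_sum_of_subset_of_nonneg hsub (fun i _ _ => hf0 i)
        refine le_trans ?_ (neg_le_abs _)
        linarith
    simp only [hgdef]
    split
    · rw [show 2 * ∑ t ∈ A k0, f t - ∑ t ∈ B k0, f t
          = ∑ t ∈ A k0, f t - ∑ t ∈ B k0 \ A k0, f t by linarith]
      exact hcore
    · rw [show 2 * ∑ t ∈ B k0 \ A k0, f t - ∑ t ∈ B k0, f t
          = -(∑ t ∈ A k0, f t - ∑ t ∈ B k0 \ A k0, f t) by linarith, abs_neg]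
      exact hcore
  -- assemble
  have hD : (∑ t ∈ Finset.univ.biUnion g, f t)
      - ∑ t ∈ (Finset.univ.biUnion g)ᶜ, f t
      = ∑ k, (2 * ∑ t ∈ g k, f t - ∑ t ∈ B k, f t) := by
    rw [Finset.sum_sub_distrib, ← Finset.mul_sum, ← hS, hT]
    linarith [hcompl]
  have hsplit : ∑ k ∈ Finset.univ.erase k0, (2 * ∑ t ∈ g k, f t - ∑ t ∈ B k, f t)
      + (2 * ∑ t ∈ g k0, f t - ∑ t ∈ B k0, f t)
      = ∑ k, (2 * ∑ t ∈ g k, f t - ∑ t ∈ B k, f t) :=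
    Finset.sum_erase_add _ _ (Finset.mem_univ k0)
  have htri := Finset.abs_sum_le_sum_abs
    (fun k => 2 * ∑ t ∈ g k, f t - ∑ t ∈ B k, f t) (Finset.univ.erase k0)
  have hbound : ∑ k ∈ Finset.univ.erase k0, |2 * ∑ t ∈ g k, f t - ∑ t ∈ B k, f t|
      ≤ ∑ k ∈ Finset.univ.erase k0, (∑ t ∈ B k, f t - 2) :=
    Finset.sum_le_sum (fun k _ => heb k)
  have hcard : ((Finset.univ.erase k0).card : ℤ) = (m : ℤ) - 1 := by
    rw [Finset.card_erase_of_mem (Finset.mem_univ _), Finset.card_univ,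
      Fintype.card_fin]
    omega
  have hsum_sub : ∑ k ∈ Finset.univ.erase k0, (∑ t ∈ B k, f t - 2)
      = (∑ k ∈ Finset.univ.erase k0, ∑ t ∈ B k, f t) - 2 * ((m : ℤ) - 1) := by
    rw [Finset.sum_sub_distrib, Finset.sum_const, nsmul_eq_mul, hcard]
    ring
  have herase : ∑ k ∈ Finset.univ.erase k0, ∑ t ∈ B k, f t + ∑ t ∈ B k0, f t
      = ∑ k, ∑ t ∈ B k, f t :=
    Finset.sum_erase_add _ _ (Finset.mem_univ k0)
  have h5 : |2 * ∑ t ∈ g k0, f t - ∑ t ∈ B k0, f t|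
      ≤ |∑ k, (2 * ∑ t ∈ g k, f t - ∑ t ∈ B k, f t)|
        + |∑ k ∈ Finset.univ.erase k0, (2 * ∑ t ∈ g k, f t - ∑ t ∈ B k, f t)| := by
    have he : 2 * ∑ t ∈ g k0, f t - ∑ t ∈ B k0, f t
        = (∑ k, (2 * ∑ t ∈ g k, f t - ∑ t ∈ B k, f t))
          - ∑ k ∈ Finset.univ.erase k0, (2 * ∑ t ∈ g k, f t - ∑ t ∈ B k, f t) := by
      linarith [hsplit]
    rw [he]
    exact abs_sub _ _
  have hm' : (2:ℤ) ≤ (m : ℤ) := by exact_mod_cast hm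
  have hpow : (2:ℤ)^(n+1) = 2 * 2^n := by ring
  rw [hunion, hD]
  rw [hT, hTval] at herase
  linarith [h5, hek0, htri, hbound, hsum_sub, herase, hrB]
end
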